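/- For m ∈ ℕ define P_m = Σ (min(⌊j0/3⌋, ⌊(j2 − j0)/3⌋ + ⌊j0/3⌋) + 1)·(j1 + 1)·x1^{j1} x2^{j2}, the sum being over all (j0, j1, j2) ∈ ℕ³ with j0 + 3j1 + j2 = m, where min is taken in ℤ. Then in R[[t]] one has (Σ_{m=0}^∞ P_m t^m) · (1 − t³)(1 − t³·x1)²(1 − t·x2)(1 − t²·x2) = 1. -/

import Mathlib

/-!
The series factors as `(1 - a t³)⁻² · S`, where `S = ∑ c(j₀, j₂) b^j₂ t^(j₀ + j₂)` and `c` is the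
`min`-of-floors coefficient. As `j₂` grows by one, `c(j₀, j₂)` increases by one exactly when
`j₂ < j₀` and `3 ∣ j₀ + 2 j₂ + 2`, so `(1 - b t) S = ∑ b^j t^(3i + 2j) = (1 - t³)⁻¹ (1 - b t²)⁻¹`.
Multiplying a series by `1 - u t^k` amounts to the coefficient recurrence `f (n + k) - u f n`,
which is how each of the factors is peeled off.
-/

open PowerSeries

variable {R : Type*} [CommRing R]

theorem PowerSeries.mk_mul_one_sub_C_mul_X_pow {f g : ℕ → R} {u : R} {k : ℕ}
    (hlow : ∀ n < k, f n = g n) (hstep : ∀ n, f (n + k) - u * f n = g (n + k)) :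
    mk f * (1 - C u * X ^ k) = mk g := by
  ext n
  rw [mul_sub, mul_one, map_sub, coeff_mk, coeff_mk, ← mul_assoc, mul_comm (mk f),
    coeff_mul_X_pow', coeff_C_mul, coeff_mk]
  split_ifs with hkn
  · obtain ⟨m, rfl⟩ := Nat.exists_eq_add_of_le' hkn
    simpa using hstep m
  · simpa using hlow n (by omega)

theorem PowerSeries.one_eq_mk : (1 : R⟦X⟧) = mk fun n => if n = 0 then 1 else 0 := by
  ext n
  rw [coeff_one, coeff_mk]

def geomCoeff (k : ℕ) (u : R) (n : ℕ) : R := if k ∣ n then u ^ (n / k) else 0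

def geomSqCoeff (k : ℕ) (u : R) (n : ℕ) : R :=
  if k ∣ n then (n / k + 1 : ℕ) * u ^ (n / k) else 0

theorem mk_geomCoeff_mul {k : ℕ} (u : R) (hk : 0 < k) :
    mk (geomCoeff k u) * (1 - C u * X ^ k) = 1 := by
  refine (mk_mul_one_sub_C_mul_X_pow (fun n hn => ?_) (fun n => ?_)).trans one_eq_mk.symm
  · rcases n.eq_zero_or_pos with rfl | hn0
    · simp [geomCoeff]
    · simp [geomCoeff, Nat.not_dvd_of_pos_of_lt hn0 hn, hn0.ne']
  · simp only [geomCoeff, Nat.dvd_add_self_right, Nat.add_div_right _ hk, hk.ne',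
      add_eq_zero, and_false, if_false]
    split_ifs <;> ring

theorem mk_geomSqCoeff_mul {k : ℕ} (u : R) (hk : 0 < k) :
    mk (geomSqCoeff k u) * (1 - C u * X ^ k) = mk (geomCoeff k u) := by
  refine mk_mul_one_sub_C_mul_X_pow (fun n hn => ?_) (fun n => ?_)
  · rcases n.eq_zero_or_pos with rfl | hn0
    · simp [geomCoeff, geomSqCoeff]
    · simp [geomCoeff, geomSqCoeff, Nat.not_dvd_of_pos_of_lt hn0 hn]
  · simp only [geomCoeff, geomSqCoeff, Nat.dvd_add_self_right, Nat.add_div_right _ hk]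
    split_ifs
    · push_cast; ring
    · ring

def minFloorCoeff (j0 j2 : ℕ) : ℤ :=
  min (Int.fdiv (j0 : ℤ) 3) (Int.fdiv ((j2 : ℤ) - (j0 : ℤ)) 3 + Int.fdiv (j0 : ℤ) 3) + 1

theorem minFloorCoeff_zero_right (j0 : ℕ) : minFloorCoeff j0 0 = if 3 ∣ j0 then 1 else 0 := by
  simp only [minFloorCoeff, Int.fdiv_eq_ediv_of_nonneg _ (by norm_num : (0 : ℤ) ≤ 3)]
  split_ifs <;> omega

theorem minFloorCoeff_succ_right_sub (j0 j2 : ℕ) :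
    minFloorCoeff j0 (j2 + 1) - minFloorCoeff j0 j2 =
      if j2 < j0 ∧ 3 ∣ j0 + 2 * j2 + 2 then 1 else 0 := by
  simp only [minFloorCoeff, Int.fdiv_eq_ediv_of_nonneg _ (by norm_num : (0 : ℤ) ≤ 3)]
  split_ifs <;> omega

def minFloorPoly (b : R) (s : ℕ) : R :=
  ∑ j ∈ Finset.range (s + 1), (minFloorCoeff (s - j) j : R) * b ^ j

def residuePoly (b : R) (s : ℕ) : R :=
  ∑ j ∈ Finset.range (s + 1), if 2 * j ≤ s ∧ 3 ∣ s + j then b ^ j else 0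

theorem mk_minFloorPoly_mul (b : R) :
    mk (minFloorPoly b) * (1 - C b * X) = mk (residuePoly b) := by
  rw [← pow_one (X : R⟦X⟧)]
  refine mk_mul_one_sub_C_mul_X_pow (fun n hn => ?_) (fun n => ?_)
  · obtain rfl : n = 0 := by omega
    simp [minFloorPoly, residuePoly, minFloorCoeff]
  · rw [minFloorPoly, minFloorPoly, residuePoly, Finset.sum_range_succ' _ (n + 1),
      Finset.sum_range_succ' _ (n + 1), Finset.mul_sum, add_sub_right_comm,
      ← Finset.sum_sub_distrib, minFloorCoeff_zero_right]
    congr 1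
    · refine Finset.sum_congr rfl fun j hjn => ?_
      have hj : j ≤ n := Nat.lt_succ_iff.mp (Finset.mem_range.mp hjn)
      have hc := congrArg (Int.cast : ℤ → R) (minFloorCoeff_succ_right_sub (n - j) j)
      push_cast at hc
      rw [Nat.add_sub_add_right]
      split_ifs at hc ⊢ <;> first | omega | linear_combination b ^ (j + 1) * hc
    · split_ifs <;> simp_all

theorem mk_residuePoly_mul (b : R) :
    mk (residuePoly b) * (1 - C b * X ^ 2) = mk (geomCoeff 3 (1 : R)) := by
  refine mk_mul_one_sub_C_mul_X_pow (fun n hn => ?_) (fun n => ?_)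
  · interval_cases n <;> simp [residuePoly, geomCoeff, Finset.sum_range_succ]
  · rw [residuePoly, residuePoly, Finset.sum_range_succ _ (n + 2), if_neg (by omega), add_zero,
      Finset.sum_range_succ' _ (n + 1), Finset.mul_sum, add_sub_right_comm,
      ← Finset.sum_sub_distrib, Finset.sum_eq_zero fun j _ => ?_, zero_add]
    · simp [geomCoeff]
    · split_ifs <;> first | omega | ring

def minFloorSeries (a b : R) : R⟦X⟧ :=
  mk fun m => ∑ j ∈ (Finset.range (m + 1) ×ˢ Finset.range (m + 1) ×ˢ Finset.range (m + 1)).filter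
      (fun j => j.1 + 3 * j.2.1 + j.2.2 = m),
    ((minFloorCoeff j.1 j.2.2 * (j.2.1 + 1) : ℤ) : R) * a ^ j.2.1 * b ^ j.2.2

theorem minFloorSeries_eq (a b : R) :
    minFloorSeries a b = mk (geomSqCoeff 3 a) * mk (minFloorPoly b) := by
  ext n
  simp only [minFloorSeries, coeff_mk, coeff_mul, minFloorPoly, Finset.mul_sum]
  rw [Finset.sum_sigma']
  refine Finset.sum_of_injOn (fun j => ⟨(3 * j.2.1, j.1 + j.2.2), j.2.2⟩) ?_ ?_ ?_ ?_
  · rintro ⟨i0, i1, i2⟩ - ⟨j0, j1, j2⟩ - h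
    simp only [Sigma.mk.inj_iff, Prod.mk.injEq, heq_eq_eq] at h
    simp only [Prod.mk.injEq]
    omega
  · rintro ⟨j0, j1, j2⟩ hj
    simp only [Finset.coe_filter, Finset.mem_product, Finset.mem_range, Set.mem_ofPred_eq] at hj
    simp only [Finset.coe_sigma, Set.mem_sigma_iff, Finset.mem_coe,
      Finset.HasAntidiagonal.mem_antidiagonal, Finset.mem_range]
    omega
  · rintro ⟨⟨p, q⟩, j⟩ hpq himage
    rw [geomSqCoeff, if_neg, zero_mul]
    rintro ⟨i, rfl⟩
    simp only [Finset.mem_sigma, Finset.HasAntidiagonal.mem_antidiagonal, Finset.mem_range] at hpq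
    refine himage ⟨(q - j, i, j), ?_, ?_⟩
    · simp only [Finset.coe_filter, Finset.mem_product, Finset.mem_range, Set.mem_ofPred_eq]
      omega
    · simp only [Sigma.mk.inj_iff, Prod.mk.injEq, heq_eq_eq, true_and, and_true]
      omega
  · rintro ⟨j0, j1, j2⟩ -
    simp only [geomSqCoeff, dvd_mul_right, if_true, Nat.mul_div_cancel_left _ (by norm_num : 0 < 3),
      Nat.add_sub_cancel]
    push_cast
    ring

theorem minFloorSeries_mul_eq_one (a b : R) :
    minFloorSeries a b *
        ((1 - X ^ 3) * (1 - C a * X ^ 3) ^ 2 * (1 - C b * X) * (1 - C b * X ^ 2)) = 1 := by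
  calc _ = (mk (geomSqCoeff 3 a) * (1 - C a * X ^ 3) * (1 - C a * X ^ 3)) *
        (mk (minFloorPoly b) * (1 - C b * X) * (1 - C b * X ^ 2) * (1 - C 1 * X ^ 3)) := by
        rw [minFloorSeries_eq, map_one, one_mul]; ring
    _ = 1 := by
        rw [mk_geomSqCoeff_mul a three_pos, mk_geomCoeff_mul a three_pos, mk_minFloorPoly_mul b,
          mk_residuePoly_mul b, mk_geomCoeff_mul 1 three_pos, one_mul]

/-- Over `R = ℚ[x1,x2]`, with
`P_m = ∑ (min(⌊j0/3⌋, ⌊(j2-j0)/3⌋+⌊j0/3⌋) + 1)·(j1+1)·x1^j1 x2^j2`, summed over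
`(j0,j1,j2) ∈ ℕ³` with `j0+3j1+j2 = m` (min taken in `ℤ`, floors as `Int.fdiv`), we have
`(∑_m P_m t^m)·(1-t³)(1-t³·x1)²(1-t·x2)(1-t²·x2) = 1` in `R[[t]]`. -/
theorem stmt_5 :
    (PowerSeries.mk (fun m : ℕ =>
      ∑ j ∈ (Finset.range (m + 1) ×ˢ Finset.range (m + 1) ×ˢ Finset.range (m + 1)).filter
          (fun j => j.1 + 3 * j.2.1 + j.2.2 = m),
        (((min (Int.fdiv (j.1 : ℤ) 3)
              (Int.fdiv ((j.2.2 : ℤ) - (j.1 : ℤ)) 3 + Int.fdiv (j.1 : ℤ) 3) + 1) *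
            ((j.2.1 : ℤ) + 1) : ℤ) : MvPolynomial (Fin 2) ℚ) *
          MvPolynomial.X 0 ^ j.2.1 * MvPolynomial.X 1 ^ j.2.2)) *
      ((1 - PowerSeries.X ^ 3) *
        (1 - PowerSeries.C (MvPolynomial.X 0 : MvPolynomial (Fin 2) ℚ) * PowerSeries.X ^ 3) ^ 2 *
        (1 - PowerSeries.C (MvPolynomial.X 1 : MvPolynomial (Fin 2) ℚ) * PowerSeries.X) *
        (1 - PowerSeries.C (MvPolynomial.X 1 : MvPolynomial (Fin 2) ℚ) * PowerSeries.X ^ 2)) =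
      1 :=
  minFloorSeries_mul_eq_one (MvPolynomial.X 0) (MvPolynomial.X 1)
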